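/- Let P_t be a Markov kernel on ℝᵈ admitting a strictly positive density p(t,x,z) with respect to Lebesgue measure, and suppose there exists c ≥ 1 such that for all x, y, z ∈ ℝᵈ and t ∈ (0,1], c⁻¹ (t^{−d/α} ∧ t/|x−z|^{d+α}) ≤ p(t,x,z) ≤ c (t^{−d/α} ∧ t/|x−z|^{d+α}). Then for all t ∈ (0,1] and x, y, z ∈ ℝᵈ, p(t,x,z)/p(t,y,z) ≤ 2^{d+α} c² (1 + |x−y|/t^{1/α})^{d+α}. -/

import Mathlib

/-! Writing `T = t^{1/α}` and `β = d + α`, the bound `t^{-d/α} ∧ t/r^β` equals `t / (T ∨ r)^β`.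
Since `T ∨ |y - z| ≤ (T ∨ |x - z|) + |x - y| ≤ (T ∨ |x - z|) (1 + |x - y|/T)`, the upper bound at
`(x, z)` divided by the lower bound at `(y, z)` is at most `c² (1 + |x - y|/T)^β`. -/

open Set

lemma Real.rpow_neg_div_eq_div_rpow_add {t : ℝ} (ht : 0 < t) (a : ℝ) {α : ℝ} (hα : α ≠ 0) :
    t ^ (-a / α) = t / (t ^ (1 / α)) ^ (a + α) := by
  rw [← Real.rpow_mul ht.le, eq_div_iff (Real.rpow_pos_of_pos ht _).ne', ← Real.rpow_add ht]
  conv_rhs => rw [← Real.rpow_one t]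
  congr 1
  field_simp
  ring

lemma ENNReal.min_ofReal_div_rpow {t T r β : ℝ} (ht : 0 ≤ t) (hT : 0 < T) (hr : 0 ≤ r)
    (hβ : 0 < β) :
    min (ENNReal.ofReal (t / T ^ β)) (ENNReal.ofReal t / ENNReal.ofReal (r ^ β)) =
      ENNReal.ofReal (t / max T r ^ β) := by
  rcases hr.eq_or_lt with rfl | hr
  · by_cases ht0 : t = 0
    · simp [ht0]
    · rw [Real.zero_rpow hβ.ne', ENNReal.ofReal_zero,
        ENNReal.div_zero (ENNReal.ofReal_pos.2 (lt_of_le_of_ne ht (Ne.symm ht0))).ne',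
        max_eq_left hT.le, min_top_right]
  · rw [← ENNReal.ofReal_div_of_pos (Real.rpow_pos_of_pos hr _), ← ENNReal.ofReal_min]
    congr 1
    rcases le_total T r with h | h
    · rw [max_eq_right h, min_eq_right (by gcongr)]
    · rw [max_eq_left h, min_eq_left (by gcongr)]

lemma max_norm_sub_le_mul {E : Type*} [SeminormedAddCommGroup E] {T : ℝ} (hT : 0 < T)
    (x y z : E) : max T ‖y - z‖ ≤ max T ‖x - z‖ * (1 + ‖x - y‖ / T) := by
  have hM : T ≤ max T ‖x - z‖ := le_max_left _ _
  have htri : ‖y - z‖ ≤ ‖x - y‖ + ‖x - z‖ := by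
    simpa [norm_sub_rev y x] using norm_sub_le_norm_sub_add_norm_sub y x z
  have hδ : ‖x - y‖ ≤ max T ‖x - z‖ * (‖x - y‖ / T) := by
    rw [mul_div_assoc', le_div_iff₀ hT, mul_comm (max _ _)]
    exact mul_le_mul_of_nonneg_left hM (norm_nonneg _)
  have hMδ : 0 ≤ max T ‖x - z‖ * (‖x - y‖ / T) := by positivity
  rw [mul_one_add]
  exact max_le (by linarith) (by linarith [le_max_right T ‖x - z‖])

lemma div_le_sq_mul_rpow_of_bounds {c t β A Mx My px py : ℝ} (hc : 0 < c) (ht : 0 < t)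
    (hMx : 0 < Mx) (hMy : 0 < My) (hβ : 0 ≤ β) (hM : My ≤ Mx * A)
    (hpx : px ≤ c * (t / Mx ^ β)) (hpy : c⁻¹ * (t / My ^ β) ≤ py) :
    px / py ≤ c ^ 2 * A ^ β := by
  have hlow : 0 < c⁻¹ * (t / My ^ β) := by positivity
  have hratio : My / Mx ≤ A := by rwa [div_le_iff₀' hMx]
  calc px / py ≤ c * (t / Mx ^ β) / (c⁻¹ * (t / My ^ β)) :=
        div_le_div₀ (by positivity) hpx hlow hpy
    _ = c ^ 2 * (My / Mx) ^ β := by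
        rw [Real.div_rpow hMy.le hMx.le]
        field_simp
    _ ≤ c ^ 2 * A ^ β := by gcongr

theorem stmt_9_general {d : ℕ} (α : ℝ) (hα : 1 ≤ α) (c : ℝ) (hc : 1 ≤ c)
    (p : ℝ → EuclideanSpace ℝ (Fin d) → EuclideanSpace ℝ (Fin d) → ℝ)
    (hlow : ∀ t ∈ Ioc (0:ℝ) 1, ∀ x z,
      ENNReal.ofReal c⁻¹ *
          min (ENNReal.ofReal (t ^ (-(d:ℝ) / α)))
            (ENNReal.ofReal t / ENNReal.ofReal (‖x - z‖ ^ ((d:ℝ) + α)))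
        ≤ ENNReal.ofReal (p t x z))
    (hup : ∀ t ∈ Ioc (0:ℝ) 1, ∀ x z,
      ENNReal.ofReal (p t x z) ≤
        ENNReal.ofReal c *
          min (ENNReal.ofReal (t ^ (-(d:ℝ) / α)))
            (ENNReal.ofReal t / ENNReal.ofReal (‖x - z‖ ^ ((d:ℝ) + α)))) :
    ∀ t ∈ Ioc (0:ℝ) 1, ∀ x y z,
      p t x z / p t y z ≤
        (2:ℝ) ^ ((d:ℝ) + α) * c ^ 2 *
          (1 + ‖x - y‖ / t ^ (1 / α)) ^ ((d:ℝ) + α) := by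
  intro t ht x y z
  have ht0 : 0 < t := ht.1
  have hc0 : 0 < c := one_pos.trans_le hc
  have hβ : 0 < (d:ℝ) + α := by positivity
  set T := t ^ (1 / α)
  have hT : 0 < T := Real.rpow_pos_of_pos ht0 _
  have hprofile : ∀ u v : EuclideanSpace ℝ (Fin d),
      min (ENNReal.ofReal (t ^ (-(d:ℝ) / α)))
          (ENNReal.ofReal t / ENNReal.ofReal (‖u - v‖ ^ ((d:ℝ) + α))) =
        ENNReal.ofReal (t / max T ‖u - v‖ ^ ((d:ℝ) + α)) := fun u v => by
    rw [Real.rpow_neg_div_eq_div_rpow_add ht0 _ (by positivity)]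
    exact ENNReal.min_ofReal_div_rpow ht0.le hT (norm_nonneg _) hβ
  have hx : p t x z ≤ c * (t / max T ‖x - z‖ ^ ((d:ℝ) + α)) := by
    have h := hup t ht x z
    rw [hprofile, ← ENNReal.ofReal_mul hc0.le] at h
    exact (ENNReal.ofReal_le_ofReal_iff (by positivity)).1 h
  have hy : c⁻¹ * (t / max T ‖y - z‖ ^ ((d:ℝ) + α)) ≤ p t y z := by
    have h := hlow t ht y z
    rw [hprofile, ← ENNReal.ofReal_mul (inv_nonneg.2 hc0.le)] at h
    have hM : 0 < max T ‖y - z‖ := lt_max_of_lt_left hT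
    exact (ENNReal.ofReal_le_ofReal_iff'.1 h).resolve_right (not_le.2 (by positivity))
  calc p t x z / p t y z ≤ c ^ 2 * (1 + ‖x - y‖ / T) ^ ((d:ℝ) + α) :=
        div_le_sq_mul_rpow_of_bounds hc0 ht0 (lt_max_of_lt_left hT) (lt_max_of_lt_left hT)
          hβ.le (max_norm_sub_le_mul hT x y z) hx hy
    _ ≤ (2:ℝ) ^ ((d:ℝ) + α) * c ^ 2 * (1 + ‖x - y‖ / T) ^ ((d:ℝ) + α) := by
        rw [mul_assoc]
        exact le_mul_of_one_le_left (by positivity) (Real.one_le_rpow one_le_two hβ.le)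

theorem stmt_9 {d : ℕ} (hd : 1 ≤ d) (α : ℝ) (hα : 1 ≤ α) (c : ℝ) (hc : 1 ≤ c)
    (p : ℝ → EuclideanSpace ℝ (Fin d) → EuclideanSpace ℝ (Fin d) → ℝ)
    (hpos : ∀ t ∈ Ioc (0:ℝ) 1, ∀ x z, 0 < p t x z)
    (hlow : ∀ t ∈ Ioc (0:ℝ) 1, ∀ x z,
      ENNReal.ofReal c⁻¹ *
          min (ENNReal.ofReal (t ^ (-(d:ℝ) / α)))
            (ENNReal.ofReal t / ENNReal.ofReal (‖x - z‖ ^ ((d:ℝ) + α)))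
        ≤ ENNReal.ofReal (p t x z))
    (hup : ∀ t ∈ Ioc (0:ℝ) 1, ∀ x z,
      ENNReal.ofReal (p t x z) ≤
        ENNReal.ofReal c *
          min (ENNReal.ofReal (t ^ (-(d:ℝ) / α)))
            (ENNReal.ofReal t / ENNReal.ofReal (‖x - z‖ ^ ((d:ℝ) + α)))) :
    ∀ t ∈ Ioc (0:ℝ) 1, ∀ x y z,
      p t x z / p t y z ≤
        (2:ℝ) ^ ((d:ℝ) + α) * c ^ 2 *
          (1 + ‖x - y‖ / t ^ (1 / α)) ^ ((d:ℝ) + α) :=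
  stmt_9_general α hα c hc p hlow hup
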